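/- arXiv:2106.11438 — 2 statements merged into one kernel-verified Lean document; each statement's English description precedes it below -/
import Mathlib

section
/- Let Q be the uniform distribution over an arbitrary finite set S ⊂ ℝⁿ. Let (x, x̂) be jointly distributed, where x ~ Q and x̂ takes values in an arbitrary countable subset of ℝⁿ, satisfying Pr[ ‖x − x̂‖ ≤ ε ] ≥ 1 − δ. Then for all τ ∈ (0,1): τ(1 − δ) · log cov_{2ε, δ + τ}(Q) ≤ I(x; x̂) + 2. -/
open MeasureTheory ProbabilityTheory ENNReal
open scoped NNReal

noncomputable section

/-- `ℝⁿ` with the `ℓ₂` norm. -/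
abbrev EucSp (n : ℕ) : Type := EuclideanSpace ℝ (Fin n)

/-- `m × n` real matrices, as functions (so that the product measurable structure is found). -/
abbrev MatR (m n : ℕ) : Type := Fin m → Fin n → ℝ

/-- The `(η, δ)`-approximate covering number of a measure `R` on `ℝⁿ`: the least number of
closed `ℓ₂`-balls of radius `η` whose union has `R`-mass at least `1 - δ`. -/
def covNum {n : ℕ} (R : Measure (EucSp n)) (η δ : ℝ) : ℕ :=
  sInf {k : ℕ | ∃ s : Finset (EucSp n), s.card = k ∧
    ENNReal.ofReal (1 - δ) ≤ R (⋃ x ∈ s, Metric.closedBall x η)}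

/-- `γ` is a coupling of `μ` and `ν`. -/
def IsCoupling {α : Type*} [MeasurableSpace α] (γ : Measure (α × α)) (μ ν : Measure α) : Prop :=
  γ.map Prod.fst = μ ∧ γ.map Prod.snd = ν

/-- Wasserstein-`p` distance. -/
def wassDist {α : Type*} [MeasurableSpace α] [NormedAddCommGroup α]
    (p : ℝ) (μ ν : Measure α) : ℝ≥0∞ :=
  ⨅ γ ∈ {γ : Measure (α × α) | IsCoupling γ μ ν},
    (∫⁻ z, ENNReal.ofReal (‖z.1 - z.2‖ ^ p) ∂γ) ^ (1 / p)

/-- Wasserstein-`∞` distance. -/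
def wassInf {α : Type*} [MeasurableSpace α] [NormedAddCommGroup α]
    (μ ν : Measure α) : ℝ≥0∞ :=
  ⨅ γ ∈ {γ : Measure (α × α) | IsCoupling γ μ ν},
    essSup (fun z => ENNReal.ofReal ‖z.1 - z.2‖) γ

/-- Total variation distance between two measures. -/
def tvDist {α : Type*} [MeasurableSpace α] (μ ν : Measure α) : ℝ :=
  ⨆ s : {s : Set α // MeasurableSet s}, ((μ s.1).toReal - (ν s.1).toReal)

open Classical in
/-- Kullback-Leibler divergence (natural log), `∞` if not absolutely continuous/integrable. -/
def klDivE {α : Type*} [MeasurableSpace α] (μ ν : Measure α) : ℝ≥0∞ :=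
  if μ ≪ ν ∧ Integrable (fun x => Real.log (μ.rnDeriv ν x).toReal) μ
  then ENNReal.ofReal (∫ x, Real.log (μ.rnDeriv ν x).toReal ∂μ) else ⊤

/-- Shannon mutual information (in nats) between the two coordinates of a joint law. -/
def mutualInfoE {α β : Type*} [MeasurableSpace α] [MeasurableSpace β]
    (μ : Measure (α × β)) : ℝ≥0∞ :=
  klDivE μ ((μ.map Prod.fst).prod (μ.map Prod.snd))

/-- Mutual information in bits. -/
def mutualInfoBits {α β : Type*} [MeasurableSpace α] [MeasurableSpace β]
    (μ : Measure (α × β)) : ℝ≥0∞ :=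
  mutualInfoE μ / ENNReal.ofReal (Real.log 2)

/-- Standard product Gaussian `N(0, v I_m)` on `ℝᵐ` (with the `ℓ₂` structure). -/
def gaussianVec (m : ℕ) (v : ℝ≥0) : Measure (EucSp m) :=
  (Measure.pi fun _ : Fin m => gaussianReal 0 v).map
    (⇑(EuclideanSpace.equiv (Fin m) ℝ).symm)

/-- Law of an `m × n` random matrix with i.i.d. `N(0, 1/m)` entries. -/
def gaussMatrix (m n : ℕ) : Measure (MatR m n) :=
  Measure.pi fun _ : Fin m => Measure.pi fun _ : Fin n => gaussianReal 0 ((m : ℝ≥0)⁻¹)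

/-- Apply a matrix to a vector of `ℝⁿ`, landing in `ℝᵐ` (`ℓ₂` structure on both sides). -/
def applyMat {m n : ℕ} (A : MatR m n) (x : EucSp n) : EucSp m :=
  (EuclideanSpace.equiv (Fin m) ℝ).symm
    (fun i => ∑ j, A i j * (EuclideanSpace.equiv (Fin n) ℝ) x j)

/-- Maximum `ℓ₂` norm of a row of `A`. -/
def maxRowNorm {m n : ℕ} (A : MatR m n) : ℝ :=
  ⨆ i : Fin m, Real.sqrt (∑ j, (A i j) ^ 2)

/-- Joint law of `(x⋆, y)` where `x⋆ ∼ P` and `y = A x⋆ + ξ`,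
`ξ ∼ N(0, (σ²/m) I_m)` independent of `x⋆`. -/
def jointXY {m n : ℕ} (P : Measure (EucSp n)) (A : MatR m n)
    (σ : ℝ) : Measure (EucSp n × EucSp m) :=
  (P.prod (gaussianVec m (Real.toNNReal (σ ^ 2 / m)))).map
    (fun p => (p.1, applyMat A p.1 + p.2))

/-- Joint law of `(y, x⋆)`. -/
def jointYX {m n : ℕ} (P : Measure (EucSp n)) (A : MatR m n)
    (σ : ℝ) : Measure (EucSp m × EucSp n) :=
  (jointXY P A σ).map Prod.swap

/-- Law of the observation `y` alone. -/
def obsDist {m n : ℕ} (P : Measure (EucSp n)) (A : MatR m n)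
    (σ : ℝ) : Measure (EucSp m) :=
  (jointXY P A σ).map Prod.snd

/-- `κ` is (a version of) the posterior/conditional distribution of the second coordinate given
the first, for the joint law `ρ`.  Sampling from `κ y` is posterior sampling. -/
def IsPosterior {α β : Type*} [MeasurableSpace α] [MeasurableSpace β]
    (ρ : Measure (α × β)) (κ : Kernel α β) : Prop :=
  IsMarkovKernel κ ∧ ∀ s t : Set _, MeasurableSet s → MeasurableSet t →
    ρ (s ×ˢ t) = ∫⁻ y in s, κ y t ∂(ρ.map Prod.fst)

/-!
Fano's method with a guess set. Let `k = cov_{2ε,δ+τ}(Q) ≥ 2`. Greedily pick fewer than `k`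
balls of radius `ε`, with union `U`, until every ball `B(v, ε)` has `Q`-mass at most
`1 / (k - 1)` outside `U`; the process must stop before `k - 1` steps, because fewer than `k`
balls of radius `2ε` carry less than `1 - δ - τ`. The event `G = {‖x - x̂‖ ≤ ε, x ∉ U}` then has
probability at least `τ` under the joint law and at most `1 / (k - 1)` under the product of the
marginals. The log-sum inequality on the partition `{G, Gᶜ}` (data processing for the indicator
of `G`) gives `τ log (k - 1) ≤ I(x; x̂) + log 2`, and `log k ≤ log (k - 1) + log 2`.
-/

lemma mul_log_div_le_setIntegral_llr {α : Type*} [MeasurableSpace α] {μ ν : Measure α}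
    [IsFiniteMeasure μ] [IsFiniteMeasure ν] (hμν : μ ≪ ν) (hint : Integrable (llr μ ν) μ)
    {A : Set α} {c : ℝ} (hc : ν.real A ≤ c) :
    μ.real A * Real.log (μ.real A / c) ≤ ∫ x in A, llr μ ν x ∂μ := by
  rcases eq_or_ne (μ A) 0 with hμA | hμA
  · simp [measureReal_def, hμA, Measure.restrict_eq_zero.mpr hμA]
  have ha : 0 < μ.real A := ENNReal.toReal_pos hμA (measure_ne_top _ _)
  have hc0 : 0 < c :=
    (ENNReal.toReal_pos (fun h => hμA (hμν h)) (measure_ne_top _ _)).trans_le hc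
  set t := μ.real A / c
  have ht : 0 < t := div_pos ha hc0
  -- `log r ≥ log t + 1 - t / r` pointwise, and `1 / (dμ/dν) = dν/dμ` integrates to at most `ν A`.
  have hpt : ∀ᵐ x ∂μ.restrict A,
      Real.log t + 1 - t * (ν.rnDeriv μ x).toReal ≤ llr μ ν x := by
    refine ae_restrict_of_ae ?_
    filter_upwards [Measure.rnDeriv_pos hμν, hμν.ae_le (Measure.rnDeriv_lt_top μ ν),
      Measure.inv_rnDeriv hμν] with x hpos hlt hinv
    have hr : 0 < (μ.rnDeriv ν x).toReal := ENNReal.toReal_pos hpos.ne' hlt.ne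
    have := Real.one_sub_inv_le_log_of_pos (div_pos hr ht)
    rw [Real.log_div hr.ne' ht.ne', inv_div] at this
    rw [← hinv, Pi.inv_apply, ENNReal.toReal_inv, llr]
    field_simp at this ⊢
    linarith
  have hint' : IntegrableOn (fun x => (ν.rnDeriv μ x).toReal) A μ :=
    Measure.integrableOn_toReal_rnDeriv (measure_ne_top _ _)
  calc μ.real A * Real.log t = (Real.log t + 1) * μ.real A - t * c := by
        simp only [t]; field_simp; ring
    _ ≤ (Real.log t + 1) * μ.real A - t * ∫ x in A, (ν.rnDeriv μ x).toReal ∂μ := by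
        gcongr
        exact (Measure.setIntegral_toReal_rnDeriv_le (measure_ne_top _ _)).trans hc
    _ = ∫ x in A, (Real.log t + 1 - t * (ν.rnDeriv μ x).toReal) ∂μ := by
        rw [integral_sub (integrable_const _) (hint'.const_mul t), integral_const,
          integral_const_mul, smul_eq_mul, measureReal_restrict_apply_univ, mul_comm]
    _ ≤ ∫ x in A, llr μ ν x ∂μ :=
        integral_mono_ae ((integrable_const _).sub (hint'.const_mul t)) hint.integrableOn hpt

lemma mul_log_inv_le_integral_llr_add_log_two {α : Type*} [MeasurableSpace α]
    {μ ν : Measure α} [IsProbabilityMeasure μ] [IsProbabilityMeasure ν] (hμν : μ ≪ ν)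
    (hint : Integrable (llr μ ν) μ) {G : Set α} (hG : MeasurableSet G) {s : ℝ} (hs : 0 < s)
    (hνG : ν.real G ≤ s) :
    μ.real G * Real.log s⁻¹ ≤ ∫ x, llr μ ν x ∂μ + Real.log 2 := by
  set p := μ.real G
  have hG' := mul_log_div_le_setIntegral_llr hμν hint hνG
  have hGc := mul_log_div_le_setIntegral_llr hμν hint (A := Gᶜ) (c := 1) measureReal_le_one
  rw [probReal_compl_eq_one_sub hG, div_one] at hGc
  have hsplit : p * Real.log (p / s) = p * Real.log p + p * Real.log s⁻¹ := by
    rcases eq_or_ne p 0 with hp | hp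
    · simp [hp]
    rw [div_eq_mul_inv, Real.log_mul hp (inv_ne_zero hs.ne'), mul_add]
  have hent : Real.binEntropy p ≤ Real.log 2 := Real.binEntropy_le_log_two
  rw [Real.binEntropy, Real.log_inv, Real.log_inv] at hent
  rw [← integral_add_compl hG hint]
  linarith

lemma MeasureTheory.Measure.prod_apply_le_of_forall_measure_slice_le {α β : Type*}
    [MeasurableSpace α] [MeasurableSpace β] {μ : Measure α} {ν : Measure β} [SFinite μ]
    [IsProbabilityMeasure ν] {G : Set (α × β)} (hG : MeasurableSet G) {c : ℝ≥0∞}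
    (hslice : ∀ y, μ ((fun x => (x, y)) ⁻¹' G) ≤ c) :
    μ.prod ν G ≤ c := by
  rw [Measure.prod_apply_symm hG]
  calc ∫⁻ y, μ ((fun x => (x, y)) ⁻¹' G) ∂ν ≤ ∫⁻ _, c ∂ν := lintegral_mono hslice
    _ = c := by simp

/-- Greedy: while some set has residual mass above `t`, adding it raises the covered mass
by more than `t`, so after `m` steps the union would carry mass `m * t`. -/
lemma exists_card_lt_forall_measure_diff_biUnion_le {α β : Type*} [MeasurableSpace α]
    {Q : Measure α} {s : β → Set α} (hs : ∀ v, MeasurableSet (s v)) {m : ℕ} {t : ℝ≥0∞}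
    (hsmall : ∀ F : Finset β, F.card ≤ m → Q (⋃ c ∈ F, s c) < m * t) :
    ∃ F : Finset β, F.card < m ∧ ∀ v, Q (s v \ ⋃ c ∈ F, s c) ≤ t := by
  classical
  by_contra! hbad
  have hgrow : ∀ j ≤ m, ∃ F : Finset β, F.card ≤ j ∧ j * t ≤ Q (⋃ c ∈ F, s c) := by
    intro j
    induction j with
    | zero => exact fun _ => ⟨∅, by simp⟩
    | succ j ih =>
      intro hj
      obtain ⟨F, hFcard, hFmass⟩ := ih (by omega)
      obtain ⟨v, hv⟩ := hbad F (by omega)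
      refine ⟨insert v F, (Finset.card_insert_le v F).trans (by omega), ?_⟩
      have hmeas : MeasurableSet (s v \ ⋃ c ∈ F, s c) :=
        (hs v).diff (F.measurableSet_biUnion fun c _ => hs c)
      calc ((j + 1 : ℕ) : ℝ≥0∞) * t = j * t + t := by push_cast; ring
        _ ≤ Q (⋃ c ∈ F, s c) + Q (s v \ ⋃ c ∈ F, s c) := add_le_add hFmass hv.le
        _ = Q (⋃ c ∈ insert v F, s c) := by
          rw [← measure_union Set.disjoint_sdiff_right hmeas, Set.union_sdiff_self,
            Finset.set_biUnion_insert, Set.union_comm]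
  obtain ⟨F, hFcard, hFmass⟩ := hgrow m le_rfl
  exact (hFmass.trans_lt (hsmall F hFcard)).false

lemma covNum_eq_zero_of_one_le {n : ℕ} (R : Measure (EucSp n)) (η : ℝ) {δ : ℝ} (hδ : 1 ≤ δ) :
    covNum R η δ = 0 :=
  Nat.sInf_eq_zero.mpr <| Or.inl
    ⟨∅, rfl, by rw [ENNReal.ofReal_of_nonpos (by linarith)]; exact zero_le⟩

lemma measure_biUnion_closedBall_lt_of_card_lt_covNum {n : ℕ} {R : Measure (EucSp n)}
    {η δ : ℝ} {F : Finset (EucSp n)} (hF : F.card < covNum R η δ) :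
    R (⋃ x ∈ F, Metric.closedBall x η) < ENNReal.ofReal (1 - δ) :=
  not_le.mp fun h => Nat.notMem_of_lt_sInf hF ⟨F, rfl, h⟩

lemma exists_measure_closedBall_diff_le_inv_covNum {n : ℕ} (R : Measure (EucSp n))
    [IsProbabilityMeasure R] {ε δ : ℝ} (hε : 0 ≤ ε) (hδ : 0 ≤ δ)
    (hk : 2 ≤ covNum R (2 * ε) δ) :
    ∃ U : Set (EucSp n), MeasurableSet U ∧ R U < ENNReal.ofReal (1 - δ) ∧
      ∀ v, R (Metric.closedBall v ε \ U) ≤ ((covNum R (2 * ε) δ - 1 : ℕ) : ℝ≥0∞)⁻¹ := by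
  set k := covNum R (2 * ε) δ
  have hsub (F : Finset (EucSp n)) (hF : F.card < k) :
      R (⋃ c ∈ F, Metric.closedBall c ε) < ENNReal.ofReal (1 - δ) :=
    (measure_mono (Set.iUnion₂_mono fun c _ =>
      Metric.closedBall_subset_closedBall (by linarith))).trans_lt
      (measure_biUnion_closedBall_lt_of_card_lt_covNum hF)
  obtain ⟨F, hFcard, hF⟩ := exists_card_lt_forall_measure_diff_biUnion_le
    (Q := R) (s := fun v => Metric.closedBall v ε) (fun _ => measurableSet_closedBall)
    (m := k - 1) (t := ((k - 1 : ℕ) : ℝ≥0∞)⁻¹) fun F hF => by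
      rw [ENNReal.mul_inv_cancel (Nat.cast_ne_zero.mpr (by omega)) (ENNReal.natCast_ne_top _)]
      exact (hsub F (by omega)).trans_le (ENNReal.ofReal_le_one.mpr (by linarith))
  exact ⟨_, F.measurableSet_biUnion fun c _ => measurableSet_closedBall, hsub F (by omega), hF⟩

lemma log_le_log_sub_one_add_log_two {k : ℕ} (hk : 2 ≤ k) :
    Real.log k ≤ Real.log ((k - 1 : ℕ) : ℝ) + Real.log 2 := by
  have hk' : (2 : ℝ) ≤ k := by exact_mod_cast hk
  rw [← Real.log_mul (by simp; omega) two_ne_zero, Nat.cast_sub (by omega)]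
  exact Real.log_le_log (by linarith) (by push_cast; linarith)

lemma exists_measurableSet_le_measureReal_prod_le {n : ℕ}
    (μ : Measure (EucSp n × EucSp n)) [IsProbabilityMeasure μ] {ε δ τ : ℝ}
    (herr : ENNReal.ofReal (1 - δ) ≤ μ {q | ‖q.1 - q.2‖ ≤ ε}) (hτ : 0 < τ)
    (hk : 2 ≤ covNum (μ.map Prod.fst) (2 * ε) (δ + τ)) :
    ∃ G : Set (EucSp n × EucSp n), MeasurableSet G ∧ τ ≤ μ.real G ∧
      ((μ.map Prod.fst).prod (μ.map Prod.snd)).real G ≤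
        ((covNum (μ.map Prod.fst) (2 * ε) (δ + τ) - 1 : ℕ) : ℝ)⁻¹ := by
  set Q := μ.map Prod.fst
  have : IsProbabilityMeasure Q := Measure.isProbabilityMeasure_map measurable_fst.aemeasurable
  have : IsProbabilityMeasure (μ.map Prod.snd) :=
    Measure.isProbabilityMeasure_map measurable_snd.aemeasurable
  set close := {q : EucSp n × EucSp n | ‖q.1 - q.2‖ ≤ ε}
  have hclose : 1 - δ ≤ μ.real close :=
    (ENNReal.ofReal_le_iff_le_toReal (measure_ne_top _ _)).mp herr
  have hδ : 0 ≤ δ := by linarith [measureReal_le_one (μ := μ) (s := close)]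
  have hδτ : δ + τ < 1 := by
    by_contra! h
    have := covNum_eq_zero_of_one_le Q (2 * ε) h
    omega
  have hε : 0 ≤ ε := by
    by_contra! h
    have : close = ∅ :=
      Set.eq_empty_of_forall_notMem fun q hq => (h.trans_le (norm_nonneg _)).not_ge hq
    rw [this, measureReal_empty] at hclose
    linarith
  obtain ⟨U, hU, hQU, hres⟩ :=
    exists_measure_closedBall_diff_le_inv_covNum Q hε (by linarith) hk
  -- Each slice `{x | (x, y) ∈ G}` is the residual ball `closedBall y ε \ U`.
  set G := close ∩ Prod.fst ⁻¹' Uᶜ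
  have hG : MeasurableSet G :=
    (measurableSet_le (by fun_prop) measurable_const).inter (measurable_fst hU.compl)
  refine ⟨G, hG, ?_, ?_⟩
  · have hμU : μ.real (Prod.fst ⁻¹' U) < 1 - (δ + τ) := by
      rw [← map_measureReal_apply measurable_fst hU]
      exact ENNReal.toReal_lt_of_lt_ofReal hQU
    have : close ⊆ G ∪ Prod.fst ⁻¹' U := fun q hq => by
      by_cases q.1 ∈ U <;> simp_all [G]
    linarith [measureReal_mono (μ := μ) this, measureReal_union_le (μ := μ) G (Prod.fst ⁻¹' U)]
  · have := Measure.prod_apply_le_of_forall_measure_slice_le (μ := Q) (ν := μ.map Prod.snd) hG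
      fun y => (le_of_eq (congrArg Q (by ext x; simp [G, close, dist_eq_norm]))).trans (hres y)
    refine (ENNReal.toReal_mono ?_ this).trans_eq ?_
    · exact ENNReal.inv_ne_top.mpr (Nat.cast_ne_zero.mpr (by omega))
    · rw [ENNReal.toReal_inv, ENNReal.toReal_natCast]

lemma mul_log_covNum_le_integral_llr_add_two_mul_log_two {n : ℕ}
    (μ : Measure (EucSp n × EucSp n)) [IsProbabilityMeasure μ]
    (hμν : μ ≪ (μ.map Prod.fst).prod (μ.map Prod.snd))
    (hint : Integrable (llr μ ((μ.map Prod.fst).prod (μ.map Prod.snd))) μ)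
    {ε δ τ : ℝ} (herr : ENNReal.ofReal (1 - δ) ≤ μ {q | ‖q.1 - q.2‖ ≤ ε})
    (hτ : 0 < τ) (hτ1 : τ ≤ 1) (hk : 2 ≤ covNum (μ.map Prod.fst) (2 * ε) (δ + τ)) :
    τ * Real.log (covNum (μ.map Prod.fst) (2 * ε) (δ + τ)) ≤
      ∫ q, llr μ ((μ.map Prod.fst).prod (μ.map Prod.snd)) q ∂μ + 2 * Real.log 2 := by
  have : IsProbabilityMeasure (μ.map Prod.fst) :=
    Measure.isProbabilityMeasure_map measurable_fst.aemeasurable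
  have : IsProbabilityMeasure (μ.map Prod.snd) :=
    Measure.isProbabilityMeasure_map measurable_snd.aemeasurable
  set k := covNum (μ.map Prod.fst) (2 * ε) (δ + τ)
  obtain ⟨G, hG, hμG, hνG⟩ := exists_measurableSet_le_measureReal_prod_le μ herr hτ hk
  have hk1 : (1 : ℝ) ≤ ((k - 1 : ℕ) : ℝ) := by exact_mod_cast (by omega : 1 ≤ k - 1)
  have hfano := mul_log_inv_le_integral_llr_add_log_two hμν hint hG (by positivity) hνG
  rw [inv_inv] at hfano
  nlinarith [mul_le_mul_of_nonneg_right hμG (Real.log_nonneg hk1), Real.log_pos one_lt_two,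
    log_le_log_sub_one_add_log_two hk]

theorem covering_uniform_general (n : ℕ)
    (Q : Measure (EucSp n))
    (μ : Measure (EucSp n × EucSp n)) (hμ : IsProbabilityMeasure μ)
    (hmarg : μ.map Prod.fst = Q)
    (ε δ : ℝ)
    (herr : ENNReal.ofReal (1 - δ) ≤ μ {q | ‖q.1 - q.2‖ ≤ ε}) :
    ∀ τ : ℝ, 0 < τ → τ < 1 →
      ENNReal.ofReal (τ * (1 - δ) * Real.logb 2 (covNum Q (2 * ε) (δ + τ)))
        ≤ mutualInfoBits μ + ENNReal.ofReal 2 := by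
  intro τ hτ hτ1
  subst hmarg
  set k := covNum (μ.map Prod.fst) (2 * ε) (δ + τ)
  rcases lt_or_ge k 2 with hk | hk
  · obtain h | h : k = 0 ∨ k = 1 := by omega
    all_goals simp [h]
  rw [mutualInfoBits, mutualInfoE, klDivE]
  split_ifs with hfin
  swap
  · simp [ENNReal.top_div]
  have hδ : 0 ≤ δ := by linarith [ENNReal.ofReal_le_one.mp (herr.trans prob_le_one)]
  have hlog2 : 0 < Real.log 2 := Real.log_pos one_lt_two
  have hkey := mul_log_covNum_le_integral_llr_add_two_mul_log_two μ hfin.1 hfin.2 herr hτ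
    hτ1.le hk
  set I := ∫ q, llr μ ((μ.map Prod.fst).prod (μ.map Prod.snd)) q ∂μ
  have hbits : τ * (1 - δ) * Real.logb 2 k ≤ I / Real.log 2 + 2 := by
    rw [Real.logb, ← mul_div_assoc, div_add' _ _ _ hlog2.ne', div_le_div_iff_of_pos_right hlog2]
    nlinarith [mul_nonneg hτ.le (Real.log_natCast_nonneg k)]
  calc ENNReal.ofReal (τ * (1 - δ) * Real.logb 2 k)
      ≤ ENNReal.ofReal (I / Real.log 2) + ENNReal.ofReal 2 :=
        (ENNReal.ofReal_le_ofReal hbits).trans ENNReal.ofReal_add_le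
    _ = ENNReal.ofReal I / ENNReal.ofReal (Real.log 2) + ENNReal.ofReal 2 := by
        rw [ENNReal.ofReal_div_of_pos hlog2]

/-- **Fano-type covering bound, uniform case** (`lemma: covering uniform`).
`x` is uniform on a finite set `S`, `x̂` takes countably many values, and
`Pr[‖x - x̂‖ ≤ ε] ≥ 1 - δ`.  Then for all `τ ∈ (0,1)`:
`τ (1-δ) log cov_{2ε, δ+τ}(Q) ≤ I(x; x̂) + 2` (information measured in bits). -/
theorem covering_uniform (n : ℕ) (S : Finset (EucSp n)) (hS : S.Nonempty)
    (Q : Measure (EucSp n))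
    (hQ : Q = (S.card : ℝ≥0∞)⁻¹ • ∑ a ∈ S, Measure.dirac a)
    (μ : Measure (EucSp n × EucSp n)) (hμ : IsProbabilityMeasure μ)
    (hmarg : μ.map Prod.fst = Q)
    (D : Set (EucSp n)) (hD : D.Countable) (hsupp : (μ.map Prod.snd) Dᶜ = 0)
    (ε δ : ℝ)
    (herr : ENNReal.ofReal (1 - δ) ≤ μ {q | ‖q.1 - q.2‖ ≤ ε}) :
    ∀ τ : ℝ, 0 < τ → τ < 1 →
      ENNReal.ofReal (τ * (1 - δ) * Real.logb 2 (covNum Q (2 * ε) (δ + τ)))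
        ≤ mutualInfoBits μ + ENNReal.ofReal 2 :=
  covering_uniform_general n Q μ hμ hmarg ε δ herr

end
end

section
/- Let v ∈ ℝⁿ be a fixed nonzero vector, let m > 1 be an integer, let c ≥ 4, and let A ∈ ℝ^{m×n} have i.i.d. N(0, 1/m) entries. Then Pr_A[ ‖Av‖ ≤ (2/√c)·‖v‖ ] ≤ (2/√(mπ)) · (2e/√c)^m. -/
open MeasureTheory ProbabilityTheory ENNReal
open scoped NNReal

noncomputable section

/-! Chernoff bound on the lower tail: for `t ≤ 0`,
`P(‖Av‖² ≤ r²) ≤ e^{-t r²} E[e^{t ‖Av‖²}]`. The rows of `A` are independent and each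
`⟨Aᵢ, v⟩` is `N(0, ‖v‖²/m)`, so the moment generating function factorises as
`(1 - 2t‖v‖²/m)^{-m/2}`. At the threshold `r = ‖v‖/√κ` the optimal `t` gives
`(e^{(1 - 1/κ)/2}/√κ)^m`; take `κ = c/4` and use `e^{m/2} ≤ 2 e^m / √(mπ)`. -/

open Real

/-- For `1 ≤ 2 * t * s` both sides are `0`: the integrand is not integrable, and `√` of a
nonpositive number is `0`. -/
lemma integral_exp_mul_sq_gaussianReal (t : ℝ) (s : ℝ≥0) :
    ∫ x, exp (t * x ^ 2) ∂gaussianReal 0 s = (√(1 - 2 * t * s))⁻¹ := by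
  rcases eq_or_ne s 0 with rfl | hs
  · simp [gaussianReal_zero_var]
  calc ∫ x, exp (t * x ^ 2) ∂gaussianReal 0 s
      = ∫ x, (√(2 * π * s))⁻¹ * exp (-((2 * (s : ℝ))⁻¹ - t) * x ^ 2) := by
        rw [integral_gaussianReal_eq_integral_smul hs]
        refine integral_congr_ae (ae_of_all _ fun x => ?_)
        simp only [gaussianPDFReal_def, smul_eq_mul]
        rw [mul_assoc, ← exp_add]
        congr 2
        field_simp
        ring
    _ = (√(1 - 2 * t * s))⁻¹ := by
        rw [integral_const_mul, integral_gaussian, ← sqrt_inv, ← sqrt_mul (by positivity),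
          ← sqrt_inv]
        congr 1
        field_simp

lemma map_pi_gaussianReal_sum_mul {ι : Type*} [Fintype ι] (s : ℝ≥0) (w : ι → ℝ) :
    (Measure.pi fun _ : ι => gaussianReal 0 s).map (fun x => ∑ j, x j * w j)
      = gaussianReal 0 ((∑ j, ‖w j‖₊ ^ 2) * s) := by
  have hpi : (Measure.pi fun _ : ι => gaussianReal 0 s).map (fun x j => x j * w j)
      = Measure.pi fun j => gaussianReal 0 (‖w j‖₊ ^ 2 * s) := by
    rw [Measure.pi_map_pi (f := fun j (x : ℝ) => x * w j) (fun j => by fun_prop)]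
    congr 1
    ext1 j
    simp_rw [mul_comm _ (w j)]
    rw [gaussianReal_map_const_mul, mul_zero]
    congr 2
    ext
    simp
  rw [show (fun x : ι → ℝ => ∑ j, x j * w j)
      = (fun y => ∑ j, y j) ∘ (fun x j => x j * w j) from rfl,
    ← Measure.map_map (by fun_prop) (by fun_prop), hpi]
  refine Measure.ext_of_charFun ?_
  rw [charFun_map_sum_pi_eq_prod]
  ext u
  simp only [Finset.prod_apply, charFun_gaussianReal, ← Complex.exp_sum]
  congr 1
  push_cast
  simp [Finset.sum_div, Finset.sum_mul]

instance isProbabilityMeasure_gaussMatrix (m n : ℕ) :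
    IsProbabilityMeasure (gaussMatrix m n) := by
  unfold gaussMatrix
  infer_instance

lemma norm_applyMat_sq {m n : ℕ} (A : MatR m n) (x : EucSp n) :
    ‖applyMat A x‖ ^ 2 = ∑ i, (∑ j, A i j * x j) ^ 2 :=
  EuclideanSpace.real_norm_sq_eq _

@[fun_prop]
lemma measurable_applyMat {m n : ℕ} (x : EucSp n) :
    Measurable fun A : MatR m n => applyMat A x := by
  unfold applyMat
  fun_prop

lemma mgf_norm_applyMat_sq {m n : ℕ} (v : EucSp n) (t : ℝ) :
    mgf (fun A => ‖applyMat A v‖ ^ 2) (gaussMatrix m n) t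
      = (√(1 - 2 * t * ‖v‖ ^ 2 / m))⁻¹ ^ m := by
  have hrow : ∫ row : Fin n → ℝ, exp (t * (∑ j, row j * v j) ^ 2)
      ∂(Measure.pi fun _ => gaussianReal 0 ((m : ℝ≥0)⁻¹))
      = (√(1 - 2 * t * ‖v‖ ^ 2 / m))⁻¹ := by
    rw [← integral_map (f := fun y => exp (t * y ^ 2))
      (Finset.measurable_sum _ fun j _ => by fun_prop).aemeasurable (by fun_prop),
      map_pi_gaussianReal_sum_mul, integral_exp_mul_sq_gaussianReal]
    congr 2
    push_cast
    rw [← EuclideanSpace.norm_sq_eq]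
    ring
  calc mgf (fun A => ‖applyMat A v‖ ^ 2) (gaussMatrix m n) t
      = ∫ A : Fin m → Fin n → ℝ, ∏ i, exp (t * (∑ j, A i j * v j) ^ 2)
          ∂gaussMatrix m n := by
        simp_rw [mgf, norm_applyMat_sq, Finset.mul_sum, exp_sum]
    _ = _ := by
        rw [gaussMatrix, integral_fintype_prod_eq_pow
          (fun row : Fin n → ℝ => exp (t * (∑ j, row j * v j) ^ 2)), hrow, Fintype.card_fin]

lemma gaussMatrix_norm_applyMat_le_le {m n : ℕ} (v : EucSp n) {t : ℝ} (ht : t ≤ 0) (r : ℝ) :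
    gaussMatrix m n {A | ‖applyMat A v‖ ≤ r}
      ≤ ENNReal.ofReal (exp (-t * r ^ 2) * (√(1 - 2 * t * ‖v‖ ^ 2 / m))⁻¹ ^ m) := by
  have hint : Integrable (fun A => exp (t * ‖applyMat A v‖ ^ 2)) (gaussMatrix m n) := by
    refine Integrable.of_bound (by fun_prop) 1 (ae_of_all _ fun A => ?_)
    rw [Real.norm_of_nonneg (exp_nonneg _), exp_le_one_iff]
    exact mul_nonpos_of_nonpos_of_nonneg ht (sq_nonneg _)
  calc gaussMatrix m n {A | ‖applyMat A v‖ ≤ r}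
      ≤ gaussMatrix m n {A | ‖applyMat A v‖ ^ 2 ≤ r ^ 2} :=
        measure_mono <| Set.ofPred_subset_ofPred.2 fun _ hA =>
          pow_le_pow_left₀ (norm_nonneg _) hA 2
    _ = ENNReal.ofReal ((gaussMatrix m n).real {A | ‖applyMat A v‖ ^ 2 ≤ r ^ 2}) :=
        (ofReal_measureReal).symm
    _ ≤ _ := by
        rw [← mgf_norm_applyMat_sq v t]
        exact ENNReal.ofReal_le_ofReal (measure_le_le_exp_mul_mgf _ ht hint)

lemma gaussMatrix_norm_applyMat_le_div_sqrt_le {m n : ℕ} (hm : 0 < m) {v : EucSp n}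
    (hv : v ≠ 0) {κ : ℝ} (hκ : 1 ≤ κ) :
    gaussMatrix m n {A | ‖applyMat A v‖ ≤ ‖v‖ / √κ}
      ≤ ENNReal.ofReal ((exp ((1 - κ⁻¹) / 2) / √κ) ^ m) := by
  have hV : 0 < ‖v‖ ^ 2 := by positivity
  have hm' : (0 : ℝ) < m := by positivity
  set t := -(m * (κ - 1) / (2 * ‖v‖ ^ 2))
  have hκ' : 0 ≤ κ - 1 := by linarith
  have ht : t ≤ 0 := neg_nonpos.2 (by positivity)
  have hexp : -t * (‖v‖ / √κ) ^ 2 = m * ((1 - κ⁻¹) / 2) := by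
    rw [div_pow, sq_sqrt (by linarith)]
    simp only [t]
    field_simp
  have hvar : 1 - 2 * t * ‖v‖ ^ 2 / m = κ := by
    simp only [t]
    field_simp
    ring
  refine (gaussMatrix_norm_applyMat_le_le v ht _).trans_eq ?_
  rw [hexp, hvar, exp_nat_mul, div_pow, inv_pow, ← div_eq_mul_inv]

lemma exp_half_le_two_div_sqrt_mul_pi_mul_exp {x : ℝ} (hx : 0 < x) :
    exp (x / 2) ≤ 2 / √(x * π) * exp x := by
  have hsq : x * π ≤ (2 * exp (x / 2)) ^ 2 := by
    have hexp : x / 2 + 1 ≤ exp (x / 2) := add_one_le_exp (x / 2)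
    nlinarith [pi_lt_four, exp_pos (x / 2)]
  have hsqrt : √(x * π) ≤ 2 * exp (x / 2) := sqrt_le_iff.2 ⟨by positivity, hsq⟩
  rw [div_mul_eq_mul_div, le_div_iff₀ (by positivity)]
  calc exp (x / 2) * √(x * π) ≤ exp (x / 2) * (2 * exp (x / 2)) := by gcongr
    _ = 2 * exp x := by rw [← add_halves x, exp_add]; ring_nf

/-- **Lower tail of the norm of a Gaussian projection** (used in
`lemma: noisy pout tv improved`, Case 1).  For fixed nonzero `v`, `A` with i.i.d. `N(0,1/m)`
entries, `m > 1`, `c ≥ 4`:  `Pr[‖Av‖ ≤ (2/√c) ‖v‖] ≤ (2/√(mπ)) (2e/√c)^m`. -/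
theorem gaussian_projection_lower_tail (n m : ℕ) (hm : 1 < m) (c : ℝ) (hc : 4 ≤ c)
    (v : EucSp n) (hv : v ≠ 0) :
    gaussMatrix m n {A | ‖applyMat A v‖ ≤ 2 / Real.sqrt c * ‖v‖}
      ≤ ENNReal.ofReal (2 / Real.sqrt (m * Real.pi) *
          (2 * Real.exp 1 / Real.sqrt c) ^ m) := by
  have hc0 : 0 < c := by linarith
  have hsqrt : √(c / 4) = √c / 2 := by
    rw [sqrt_div hc0.le, show (4 : ℝ) = 2 ^ 2 by norm_num, sqrt_sq zero_le_two]
  have hbase : exp ((1 - (c / 4)⁻¹) / 2) / √(c / 4) ≤ exp (1 / 2) * (2 / √c) := by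
    rw [hsqrt, div_div_eq_mul_div, mul_div_assoc]
    gcongr
    have : 0 ≤ (c / 4)⁻¹ := by positivity
    linarith
  have hr : 2 / √c * ‖v‖ = ‖v‖ / √(c / 4) := by
    rw [hsqrt]
    field_simp
  rw [hr]
  refine (gaussMatrix_norm_applyMat_le_div_sqrt_le (by omega) hv (by linarith)).trans
    (ENNReal.ofReal_le_ofReal ?_)
  calc (exp ((1 - (c / 4)⁻¹) / 2) / √(c / 4)) ^ m ≤ (exp (1 / 2) * (2 / √c)) ^ m :=
        pow_le_pow_left₀ (by positivity) hbase m
    _ = exp (m / 2) * (2 / √c) ^ m := by rw [mul_pow, ← exp_nat_mul]; ring_nf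
    _ ≤ 2 / √(m * π) * exp m * (2 / √c) ^ m := by
        gcongr
        exact exp_half_le_two_div_sqrt_mul_pi_mul_exp (by positivity)
    _ = 2 / √(m * π) * (2 * exp 1 / √c) ^ m := by
        rw [← exp_one_pow, mul_div_assoc, mul_pow]
        ring

end
end
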